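/- GreedyAllocation is (1+α)-competitive for fractional online bipartite vertex cover: let G = (L,R,E) be a finite bipartite graph whose right vertices arrive in the order v_1, …, v_m, and let y : L → [0,1] and z : R → [0,1] be produced by GreedyAllocation. Then y_u + z_v ≥ 1 for every edge (u,v) ∈ E, and ∑_{u∈L} y_u + ∑_{v∈R} z_v ≤ (1+α)·|C| for every vertex cover C of G. -/

import Mathlib

open Finset

/-- The constant `α = 1/(e-1)`, so that `1 + α = 1/(1 - 1/e)`. -/
noncomputable def alpha : ℝ := 1 / (Real.exp 1 - 1)

/-- `(CL, CR)` is a vertex cover of the bipartite graph with edge set `E ⊆ L × R`. -/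
def IsVertexCover {L R : Type*} (E : Finset (L × R)) (CL : Finset L) (CR : Finset R) : Prop :=
  ∀ e ∈ E, e.1 ∈ CL ∨ e.2 ∈ CR

/-!
Charge each offline vertex `u` the potential `φ(y_u) = (1 + α) log (1 + y_u / α)`, which rises
from `0` to `1 + α` on `[0, 1]` and has slope at least `(1 + α) / (α + a)` below `a`.
A step with water level `a` increases `∑ y + ∑ z` by `(1 - a) + D`, where
`D = ∑_{u ∈ N(v)} (a - y_u)⁺`. Maximality of `a` forces `a = 1` or `(1 - a) + D = 1 + α`,
i.e. `D = α + a`; in both cases the increase is at most `(1 + α) / (α + a) · D`, hence at most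
the potential gained by `N(v)`. Given a cover `C`, a step whose online vertex lies in `C` is
paid by its budget `1 + α`, and any other step by the potential gained on `N(v) ⊆ C ∩ L`,
which totals at most `1 + α` per vertex of `C ∩ L`.
-/

open Real

lemma alpha_pos : 0 < alpha :=
  one_div_pos.mpr (sub_pos.mpr (one_lt_exp_iff.mpr one_pos))

noncomputable def potential (y : ℝ) : ℝ := (1 + alpha) * log (1 + y / alpha)

lemma potential_zero : potential 0 = 0 := by
  simp [potential]

lemma potential_one : potential 1 = 1 + alpha := by
  rw [potential, alpha, one_div_one_div, add_sub_cancel, log_exp, mul_one]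

lemma one_add_div_alpha_pos {y : ℝ} (hy : 0 ≤ y) : 0 < 1 + y / alpha :=
  add_pos_of_pos_of_nonneg one_pos (div_nonneg hy alpha_pos.le)

lemma potential_le_potential {y y' : ℝ} (hy : 0 ≤ y) (hyy' : y ≤ y') :
    potential y ≤ potential y' := by
  unfold potential
  gcongr
  · linarith [alpha_pos]
  · exact one_add_div_alpha_pos hy
  · exact alpha_pos.le

lemma div_mul_sub_le_potential_sub {y a : ℝ} (hy : 0 ≤ y) (hya : y ≤ a) :
    (1 + alpha) / (alpha + a) * (a - y) ≤ potential a - potential y := by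
  have hα := alpha_pos
  have hy' := one_add_div_alpha_pos hy
  have ha' := one_add_div_alpha_pos (hy.trans hya)
  have hlog := one_sub_inv_le_log_of_pos (div_pos ha' hy')
  rw [log_div ha'.ne' hy'.ne', inv_div] at hlog
  have hratio : 1 - (1 + y / alpha) / (1 + a / alpha) = (a - y) / (alpha + a) := by
    have : alpha + a ≠ 0 := by linarith
    field_simp
    ring
  rw [hratio] at hlog
  calc (1 + alpha) / (alpha + a) * (a - y) = (1 + alpha) * ((a - y) / (alpha + a)) := by ring
    _ ≤ (1 + alpha) * (log (1 + a / alpha) - log (1 + y / alpha)) := by gcongr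
    _ = potential a - potential y := by rw [potential, potential]; ring

lemma div_mul_max_sub_le_potential_sub {y a : ℝ} (hy : 0 ≤ y) :
    (1 + alpha) / (alpha + a) * max (a - y) 0 ≤ potential (max y a) - potential y := by
  rcases le_total a y with hay | hya
  · simp [hay]
  · rw [max_eq_left (sub_nonneg.mpr hya), max_eq_right hya]
    exact div_mul_sub_le_potential_sub hy hya

lemma IsGreatest.eq_right_or_eq_of_continuousAt {f : ℝ → ℝ} {l r c a : ℝ} (hf : ContinuousAt f a)
    (ha : IsGreatest {x | x ∈ Set.Icc l r ∧ f x ≤ c} a) : a = r ∨ f a = c := by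
  obtain ⟨⟨⟨hla, har⟩, hfa⟩, hmax⟩ := ha
  by_contra! hne
  have hfa' : f a < c := lt_of_le_of_ne hfa hne.2
  obtain ⟨x, hfx, hax, hxr⟩ := ((hf.eventually (gt_mem_nhds hfa')).filter_mono
    nhdsWithin_le_nhds |>.and (Ioo_mem_nhdsGT (lt_of_le_of_ne har hne.1))).exists
  exact (hmax ⟨⟨hla.trans hax.le, hxr.le⟩, hfx.le⟩).not_gt hax

lemma gain_le_potential_gain {ι : Type*} (N : Finset ι) {y : ι → ℝ} (hy : ∀ u ∈ N, 0 ≤ y u)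
    {a : ℝ} (ha : IsGreatest
      {x | x ∈ Set.Icc (0 : ℝ) 1 ∧ (1 - x) + ∑ u ∈ N, max (x - y u) 0 ≤ 1 + alpha} a) :
    (1 - a) + ∑ u ∈ N, max (a - y u) 0 ≤ ∑ u ∈ N, (potential (max (y u) a) - potential (y u)) := by
  have hα := alpha_pos
  have ha0 : 0 ≤ a := ha.1.1.1
  have hpot : (1 + alpha) / (alpha + a) * ∑ u ∈ N, max (a - y u) 0
      ≤ ∑ u ∈ N, (potential (max (y u) a) - potential (y u)) := by
    rw [mul_sum]
    exact sum_le_sum fun u hu => div_mul_max_sub_le_potential_sub (hy u hu)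
  rcases ha.eq_right_or_eq_of_continuousAt (by fun_prop) with rfl | htight
  · rw [add_comm alpha, div_self (by linarith), one_mul] at hpot
    linarith
  · have hsum : ∑ u ∈ N, max (a - y u) 0 = alpha + a := by linarith
    rw [hsum, div_mul_cancel₀ _ (by linarith)] at hpot
    linarith

lemma monotoneOn_nat_Iic_of_le_succ {α : Type*} [Preorder α] {f : ℕ → α} {m : ℕ}
    (hf : ∀ n < m, f n ≤ f (n + 1)) : MonotoneOn f (Set.Iic m) := by
  intro j _ k hkm hjk
  induction k, hjk using Nat.le_induction with
  | base => rfl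
  | succ k _ ih => exact (ih (Nat.le_of_succ_le hkm)).trans (hf k hkm)

lemma Fin.sum_univ_sub {M : Type*} [AddCommGroup M] (f : ℕ → M) (m : ℕ) :
    ∑ i : Fin m, (f (i + 1) - f i) = f m - f 0 := by
  rw [Fin.sum_univ_eq_sum_range (fun i => f (i + 1) - f i), sum_range_sub]

lemma sum_potential_gain_le {L : Type*} {m : ℕ} {Y : ℕ → L → ℝ} (hY0 : Y 0 = fun _ => 0)
    (CL : Finset L) (hY : ∀ u, 0 ≤ Y m u ∧ Y m u ≤ 1) :
    ∑ i : Fin m, ∑ u ∈ CL, (potential (Y ((i : ℕ) + 1) u) - potential (Y i u))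
      ≤ (1 + alpha) * #CL := by
  rw [sum_comm, mul_comm, ← nsmul_eq_mul, ← sum_const]
  refine sum_le_sum fun u _ => ?_
  rw [Fin.sum_univ_sub (fun n => potential (Y n u)), hY0, potential_zero, sub_zero,
    ← potential_one]
  exact potential_le_potential (hY u).1 (hY u).2

section Greedy

variable {L : Type*} [DecidableEq L] {m : ℕ} {E : Finset (L × Fin m)} {Y : ℕ → L → ℝ}
  {A : Fin m → ℝ}

def RaisesNeighbours (E : Finset (L × Fin m)) (A : Fin m → ℝ) (Y : ℕ → L → ℝ) : Prop :=
  ∀ i : Fin m, ∀ u : L, Y ((i : ℕ) + 1) u = if (u, i) ∈ E then max (Y i u) (A i) else Y i u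

lemma greedy_le_succ (hYstep : RaisesNeighbours E A Y) (i : Fin m) (u : L) :
    Y i u ≤ Y ((i : ℕ) + 1) u := by
  rw [hYstep]
  split_ifs
  · exact le_max_left _ _
  · exact le_rfl

lemma greedy_monotoneOn (hYstep : RaisesNeighbours E A Y) (u : L) :
    MonotoneOn (Y · u) (Set.Iic m) :=
  monotoneOn_nat_Iic_of_le_succ fun n hn => greedy_le_succ hYstep ⟨n, hn⟩ u

lemma greedy_level_le (hYstep : RaisesNeighbours E A Y) {u : L} {i : Fin m} (he : (u, i) ∈ E) :
    A i ≤ Y m u :=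
  calc A i ≤ Y ((i : ℕ) + 1) u := by rw [hYstep, if_pos he]; exact le_max_right _ _
    _ ≤ Y m u := greedy_monotoneOn hYstep u i.isLt (le_refl m) i.isLt

lemma greedy_le_one (hY0 : Y 0 = fun _ => 0) (hA1 : ∀ i, A i ≤ 1)
    (hYstep : RaisesNeighbours E A Y) :
    ∀ n ≤ m, ∀ u, Y n u ≤ 1 := by
  intro n
  induction n with
  | zero => simp [hY0]
  | succ n ih =>
    intro hn u
    have hstep : Y (n + 1) u = if (u, (⟨n, hn⟩ : Fin m)) ∈ E then max (Y n u) (A ⟨n, hn⟩)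
        else Y n u := hYstep ⟨n, hn⟩ u
    rw [hstep]
    split_ifs
    · exact max_le (ih (Nat.le_of_succ_le hn) u) (hA1 _)
    · exact ih (Nat.le_of_succ_le hn) u

lemma sum_greedy_eq_sum_raises [Fintype L] (hY0 : Y 0 = fun _ => 0)
    (hYstep : RaisesNeighbours E A Y) :
    ∑ u, Y m u = ∑ i : Fin m, ∑ u ∈ univ.filter (fun u => (u, i) ∈ E), max (A i - Y i u) 0 := by
  have hraise (i : Fin m) (u : L) :
      Y ((i : ℕ) + 1) u - Y i u = if (u, i) ∈ E then max (A i - Y i u) 0 else 0 := by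
    rw [hYstep]
    split_ifs
    · rw [← max_sub_sub_right, sub_self, max_comm]
    · exact sub_self _
  calc ∑ u, Y m u = ∑ u, ∑ i : Fin m, (Y ((i : ℕ) + 1) u - Y i u) :=
        sum_congr rfl fun u _ => by rw [Fin.sum_univ_sub (Y · u), hY0, sub_zero]
    _ = ∑ i : Fin m, ∑ u ∈ univ.filter (fun u => (u, i) ∈ E), max (A i - Y i u) 0 := by
        rw [sum_comm]
        simp only [sum_filter, hraise]

lemma greedy_step_gain_le [Fintype L] {CL : Finset L} {CR : Finset (Fin m)}
    (hC : IsVertexCover E CL CR) (hYstep : RaisesNeighbours E A Y) (i : Fin m) (hY : ∀ u, 0 ≤ Y i u)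
    (hA : IsGreatest {a : ℝ | a ∈ Set.Icc (0:ℝ) 1 ∧
        (1 - a) + ∑ u ∈ univ.filter (fun u => (u, i) ∈ E), max (a - Y i u) 0 ≤ 1 + alpha} (A i)) :
    (1 - A i) + ∑ u ∈ univ.filter (fun u => (u, i) ∈ E), max (A i - Y i u) 0
      ≤ (if i ∈ CR then 1 + alpha else 0)
        + ∑ u ∈ CL, (potential (Y ((i : ℕ) + 1) u) - potential (Y i u)) := by
  have hgain (u : L) : 0 ≤ potential (Y ((i : ℕ) + 1) u) - potential (Y i u) :=
    sub_nonneg.mpr (potential_le_potential (hY u) (greedy_le_succ hYstep i u))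
  split_ifs with hi
  · linarith [hA.1.2, sum_nonneg fun u (_ : u ∈ CL) => hgain u]
  · have hN : univ.filter (fun u => (u, i) ∈ E) ⊆ CL := fun u hu =>
      (hC _ (mem_filter.1 hu).2).resolve_right hi
    calc _ ≤ ∑ u ∈ univ.filter (fun u => (u, i) ∈ E),
          (potential (max (Y i u) (A i)) - potential (Y i u)) :=
          gain_le_potential_gain _ (fun u _ => hY u) hA
      _ = ∑ u ∈ univ.filter (fun u => (u, i) ∈ E),
          (potential (Y ((i : ℕ) + 1) u) - potential (Y i u)) :=
          sum_congr rfl fun u hu => by rw [hYstep, if_pos (mem_filter.1 hu).2]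
      _ ≤ ∑ u ∈ CL, (potential (Y ((i : ℕ) + 1) u) - potential (Y i u)) :=
          sum_le_sum_of_subset_of_nonneg hN fun u _ _ => hgain u
      _ = 0 + _ := (zero_add _).symm

end Greedy

/-- The online vertices are `0, 1, …, m-1 : Fin m`, arriving in this order; `Y i` is the vector
`y` after the first `i` arrivals. -/
theorem stmt4 {L : Type*} [Fintype L] [DecidableEq L] (m : ℕ)
    (E : Finset (L × Fin m))
    (Y : ℕ → L → ℝ) (A : Fin m → ℝ) (z : Fin m → ℝ)
    (hY0 : Y 0 = fun _ => 0)
    (hA : ∀ i : Fin m,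
      IsGreatest {a : ℝ | a ∈ Set.Icc (0:ℝ) 1 ∧
        (1 - a) + ∑ u ∈ Finset.univ.filter (fun u => (u, i) ∈ E), max (a - Y i u) 0
          ≤ 1 + alpha} (A i))
    (hYstep : ∀ i : Fin m, ∀ u : L,
      Y ((i : ℕ) + 1) u = if (u, i) ∈ E then max (Y i u) (A i) else Y i u)
    (hz : ∀ i : Fin m, z i = 1 - A i) :
    (∀ e ∈ E, 1 ≤ Y m e.1 + z e.2) ∧
    ∀ CL : Finset L, ∀ CR : Finset (Fin m), IsVertexCover E CL CR →
      ∑ u : L, Y m u + ∑ v : Fin m, z v ≤ (1 + alpha) * ((CL.card : ℝ) + (CR.card : ℝ)) := by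
  have hmono := greedy_monotoneOn hYstep
  have hY_nonneg : ∀ n ≤ m, ∀ u, 0 ≤ Y n u := fun n hn u => by
    simpa [hY0] using hmono u (Nat.zero_le m) hn (Nat.zero_le n)
  have hY_le_one := greedy_le_one hY0 (fun i => (hA i).1.1.2) hYstep
  refine ⟨fun ⟨u, i⟩ he => ?_, fun CL CR hC => ?_⟩
  · rw [hz]
    linarith [greedy_level_le hYstep he]
  calc ∑ u, Y m u + ∑ v, z v
      = ∑ i : Fin m,
          ((1 - A i) + ∑ u ∈ univ.filter (fun u => (u, i) ∈ E), max (A i - Y i u) 0) := by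
        rw [sum_greedy_eq_sum_raises hY0 hYstep, add_comm, ← sum_add_distrib]
        simp only [hz]
    _ ≤ ∑ i : Fin m, ((if i ∈ CR then 1 + alpha else 0)
          + ∑ u ∈ CL, (potential (Y ((i : ℕ) + 1) u) - potential (Y i u))) :=
        sum_le_sum fun i _ => greedy_step_gain_le hC hYstep i (hY_nonneg i i.isLt.le) (hA i)
    _ = (1 + alpha) * #CR
          + ∑ i : Fin m, ∑ u ∈ CL, (potential (Y ((i : ℕ) + 1) u) - potential (Y i u)) := by
        rw [sum_add_distrib, sum_ite_mem, univ_inter, sum_const, nsmul_eq_mul, mul_comm]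
    _ ≤ (1 + alpha) * #CR + (1 + alpha) * #CL := by
        gcongr
        exact sum_potential_gain_le hY0 CL fun u => ⟨hY_nonneg m le_rfl u, hY_le_one m le_rfl u⟩
    _ = (1 + alpha) * (#CL + #CR) := by ring
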